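/- Let A ∈ ℝ^{n×N} have full row rank, let x ∈ ℝ^N and e ∈ ℝ^n with b = Ax + e, let x^♯ be a best s-term approximation of x, and set ẽ = (AA*)^{-1/2}( A(x − x^♯) + e ). Let γ be a (3s)-th order P-RIP constant for A with γ < 1/2 and set ρ = 2γ. Suppose the sequences {x^k}, {u^k} satisfy: u^k is a best s-term approximation of x^k and x^{k+1} = u^k + A*(AA*)^{-1}(b − A u^k) for all k ≥ 0. Then for every k ≥ 0, ‖u^k − x^♯‖₂ ≤ ρ^k ‖u^0 − x^♯‖₂ + (2/(1−ρ)) ‖ẽ‖₂. -/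

import Mathlib

/-!
Write `S = (AA*)^{1/2}` and `B = S⁻¹A`. Then `BB* = 1`, so `P = B*B` is the orthogonal projection
onto the row space of `A`, and one step of the iteration reads
`x^{k+1} - x♯ = (1 - P)(u^k - x♯) + B*ẽ`. For sparse `z` the P-RIP says
`‖(1 - P)z‖² = ‖z‖² - ‖Bz‖² ≤ γ‖z‖²`, hence `⟨(1 - P)v, w⟩ = ⟨(1 - P)v, (1 - P)w⟩ ≤ γ‖v‖‖w‖`
for the `2s`-sparse `v = u^k - x♯`, `w = u^{k+1} - x♯`. As `u^{k+1}` is at least as close to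
`x^{k+1}` as `x♯`, `‖w‖² ≤ 2⟨x^{k+1} - x♯, w⟩ ≤ (2γ‖v‖ + 2‖ẽ‖)‖w‖`, and unrolling
`‖u^{k+1} - x♯‖ ≤ ρ‖u^k - x♯‖ + 2‖ẽ‖` gives the bound.
-/

open Matrix Finset Filter Topology

/-- Euclidean norm of a vector. -/
noncomputable def euclNorm {k : ℕ} (x : Fin k → ℝ) : ℝ := Real.sqrt (∑ i, x i ^ 2)

/-- Square root of a positive semidefinite matrix (as in the older Mathlib). -/
noncomputable def Matrix.PosSemidef.sqrt {n : Type*} [Fintype n] [DecidableEq n]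
    {A : Matrix n n ℝ} (hA : A.PosSemidef) : Matrix n n ℝ :=
  hA.1.eigenvectorUnitary.1 * diagonal ((↑) ∘ (Real.sqrt ∘ hA.1.eigenvalues)) *
    (star hA.1.eigenvectorUnitary : Matrix n n ℝ)

/-- `x` has at most `s` nonzero entries. -/
def IsSparse {k : ℕ} (s : ℕ) (x : Fin k → ℝ) : Prop :=
  (Finset.univ.filter fun i => x i ≠ 0).card ≤ s

/-- Spectral norm (ℓ²-operator norm) of a matrix. -/
noncomputable def specNorm {m k : Type*} [Fintype m] [Fintype k] [DecidableEq k]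
    (M : Matrix m k ℝ) : ℝ :=
  ‖LinearMap.toContinuousLinearMap (Matrix.toEuclideanLin M)‖

/-- `cols A T` is the submatrix of `A` consisting of the columns indexed by `T`. -/
def cols {n N : ℕ} (A : Matrix (Fin n) (Fin N) ℝ) (T : Finset (Fin N)) :
    Matrix (Fin n) {i : Fin N // i ∈ T} ℝ := Matrix.of fun r c => A r c.1

/-- `subv x T` is the subvector of `x` consisting of the entries indexed by `T`. -/
def subv {N : ℕ} (x : Fin N → ℝ) (T : Finset (Fin N)) : {i : Fin N // i ∈ T} → ℝ :=
  fun i => x i.1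

/-- The feedback term `(A_T* A_T)⁻¹ A_T* A_{Tᶜ} x_{Tᶜ}`. -/
noncomputable def fb {n N : ℕ} (A : Matrix (Fin n) (Fin N) ℝ) (T : Finset (Fin N))
    (x : Fin N → ℝ) : {i : Fin N // i ∈ T} → ℝ :=
  ((cols A T)ᵀ * cols A T)⁻¹ *ᵥ ((cols A T)ᵀ *ᵥ (cols A Tᶜ *ᵥ subv x Tᶜ))

lemma Matrix.PosSemidef.sqrt_mul_self {m : Type*} [Fintype m] [DecidableEq m]
    {A : Matrix m m ℝ} (hA : A.PosSemidef) : hA.sqrt * hA.sqrt = A := by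
  have hU : (star hA.1.eigenvectorUnitary : Matrix m m ℝ) * hA.1.eigenvectorUnitary = 1 := by
    simp
  have hD : diagonal ((↑) ∘ (Real.sqrt ∘ hA.1.eigenvalues)) *
      diagonal ((↑) ∘ (Real.sqrt ∘ hA.1.eigenvalues)) =
      diagonal (RCLike.ofReal ∘ hA.1.eigenvalues : m → ℝ) := by
    rw [diagonal_mul_diagonal]
    congr 1
    funext i
    simp [Real.mul_self_sqrt (hA.eigenvalues_nonneg i)]
  conv_rhs => rw [hA.1.spectral_theorem, Unitary.conjStarAlgAut_apply]
  rw [Matrix.PosSemidef.sqrt, ← hD]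
  simp only [Matrix.mul_assoc]
  rw [← Matrix.mul_assoc (star _ : Matrix m m ℝ) _ _, hU, Matrix.one_mul]

lemma Matrix.PosSemidef.transpose_sqrt {m : Type*} [Fintype m] [DecidableEq m]
    {A : Matrix m m ℝ} (hA : A.PosSemidef) : (hA.sqrt)ᵀ = hA.sqrt := by
  simp [Matrix.PosSemidef.sqrt, Matrix.transpose_mul, star_eq_conjTranspose,
    conjTranspose_eq_transpose_of_trivial, Matrix.mul_assoc]

lemma Matrix.PosDef.isUnit_det_sqrt {m : Type*} [Fintype m] [DecidableEq m]
    {A : Matrix m m ℝ} (hA : A.PosDef) : IsUnit hA.posSemidef.sqrt.det := by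
  refine isUnit_of_mul_isUnit_left (y := hA.posSemidef.sqrt.det) ?_
  rw [← det_mul, hA.posSemidef.sqrt_mul_self]
  exact hA.det_pos.ne'.isUnit

section Preconditioning

variable {m k : Type*} [Fintype m] [DecidableEq m] [Fintype k]
  {A : Matrix m k ℝ} {S : Matrix m m ℝ}

lemma mul_transpose_eq_one_of_mul_self_eq (hS : IsUnit S.det) (hSt : Sᵀ = S)
    (hSS : S * S = A * Aᵀ) : S⁻¹ * A * (S⁻¹ * A)ᵀ = 1 := by
  rw [transpose_mul, transpose_nonsing_inv, hSt]
  calc S⁻¹ * A * (Aᵀ * S⁻¹) = S⁻¹ * (S * S) * S⁻¹ := by simp only [hSS, Matrix.mul_assoc]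
    _ = 1 := by simp only [← Matrix.mul_assoc, nonsing_inv_mul _ hS, Matrix.one_mul,
      mul_nonsing_inv _ hS]

lemma transpose_mul_inv_eq_of_mul_self_eq (hSt : Sᵀ = S) (hSS : S * S = A * Aᵀ) :
    Aᵀ * (A * Aᵀ)⁻¹ = (S⁻¹ * A)ᵀ * S⁻¹ := by
  rw [← hSS, Matrix.mul_inv_rev, transpose_mul, transpose_nonsing_inv, hSt, Matrix.mul_assoc]

lemma add_transpose_mulVec_sub_eq (hSt : Sᵀ = S) (hSS : S * S = A * Aᵀ) (x xs u : k → ℝ)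
    (e : m → ℝ) :
    u + Aᵀ *ᵥ ((A * Aᵀ)⁻¹ *ᵥ (A *ᵥ x + e - A *ᵥ u)) - xs =
      (u - xs) - (S⁻¹ * A)ᵀ *ᵥ ((S⁻¹ * A) *ᵥ (u - xs)) +
        (S⁻¹ * A)ᵀ *ᵥ (S⁻¹ *ᵥ (A *ᵥ (x - xs) + e)) := by
  rw [mulVec_mulVec, transpose_mul_inv_eq_of_mul_self_eq hSt hSS]
  simp only [← mulVec_mulVec, mulVec_add, mulVec_sub]
  abel

end Preconditioning

lemma euclNorm_nonneg {k : ℕ} (v : Fin k → ℝ) : 0 ≤ euclNorm v := Real.sqrt_nonneg _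

lemma euclNorm_sq {k : ℕ} (v : Fin k → ℝ) : euclNorm v ^ 2 = v ⬝ᵥ v := by
  rw [euclNorm, Real.sq_sqrt (Finset.sum_nonneg fun i _ => sq_nonneg _)]
  simp [dotProduct, sq]

lemma dotProduct_le_euclNorm_mul {k : ℕ} (v w : Fin k → ℝ) :
    v ⬝ᵥ w ≤ euclNorm v * euclNorm w := by
  rw [euclNorm, euclNorm, ← Real.sqrt_mul (Finset.sum_nonneg fun i _ => sq_nonneg _)]
  exact (le_abs_self _).trans <| Real.abs_le_sqrt <| Finset.sum_mul_sq_le_sq_mul_sq _ v w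

lemma euclNorm_le_of_sq_le {k : ℕ} {v : Fin k → ℝ} {c : ℝ} (hc : 0 ≤ c)
    (h : euclNorm v ^ 2 ≤ c * euclNorm v) : euclNorm v ≤ c := by
  rcases (euclNorm_nonneg v).eq_or_lt with h0 | h0
  · rwa [← h0]
  · exact le_of_mul_le_mul_right (by nlinarith) h0

lemma IsSparse.mono {k s t : ℕ} {x : Fin k → ℝ} (hx : IsSparse s x) (h : s ≤ t) :
    IsSparse t x := hx.trans h

lemma IsSparse.sub {k s t : ℕ} {a b : Fin k → ℝ} (ha : IsSparse s a) (hb : IsSparse t b) :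
    IsSparse (s + t) (a - b) := by
  refine (card_le_card fun i hi => ?_).trans ((card_union_le _ _).trans (add_le_add ha hb))
  simp only [mem_filter, mem_union, mem_univ, true_and, Pi.sub_apply] at hi ⊢
  by_contra! hc
  exact hi (by rw [hc.1, hc.2, sub_zero])

lemma sq_euclNorm_sub_le_of_euclNorm_sub_le {k : ℕ} {u y z : Fin k → ℝ}
    (h : euclNorm (u - y) ≤ euclNorm (z - y)) :
    euclNorm (u - z) ^ 2 ≤ 2 * ((y - z) ⬝ᵥ (u - z)) := by
  have h2 := pow_le_pow_left₀ (euclNorm_nonneg _) h 2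
  simp only [euclNorm_sq, sub_dotProduct, dotProduct_sub] at h2 ⊢
  linarith [dotProduct_comm u z, dotProduct_comm u y, dotProduct_comm y z]

section RowOrthonormal

variable {m k : ℕ} {B : Matrix (Fin m) (Fin k) ℝ}

lemma dotProduct_transpose_mulVec (v : Fin m → ℝ) (w : Fin k → ℝ) :
    (Bᵀ *ᵥ v) ⬝ᵥ w = v ⬝ᵥ (B *ᵥ w) := by
  rw [dotProduct_comm, dotProduct_mulVec, vecMul_transpose, dotProduct_comm]

lemma mulVec_sub_transpose_mulVec_mulVec (hB : B * Bᵀ = 1) (z : Fin k → ℝ) :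
    B *ᵥ (z - Bᵀ *ᵥ (B *ᵥ z)) = 0 := by
  rw [mulVec_sub, mulVec_mulVec, hB, one_mulVec, sub_self]

lemma sub_transpose_mulVec_mulVec_dotProduct (hB : B * Bᵀ = 1) (v w : Fin k → ℝ) :
    (v - Bᵀ *ᵥ (B *ᵥ v)) ⬝ᵥ w = (v - Bᵀ *ᵥ (B *ᵥ v)) ⬝ᵥ (w - Bᵀ *ᵥ (B *ᵥ w)) := by
  rw [dotProduct_sub, dotProduct_comm _ (Bᵀ *ᵥ _), dotProduct_transpose_mulVec,
    mulVec_sub_transpose_mulVec_mulVec hB, dotProduct_zero, sub_zero]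

lemma euclNorm_sq_eq_add (hB : B * Bᵀ = 1) (z : Fin k → ℝ) :
    euclNorm z ^ 2 = euclNorm (B *ᵥ z) ^ 2 + euclNorm (z - Bᵀ *ᵥ (B *ᵥ z)) ^ 2 := by
  have hM := sub_transpose_mulVec_mulVec_dotProduct hB z z
  have hP : (Bᵀ *ᵥ (B *ᵥ z)) ⬝ᵥ z = (B *ᵥ z) ⬝ᵥ (B *ᵥ z) := dotProduct_transpose_mulVec _ _
  simp only [euclNorm_sq]
  rw [← hM, sub_dotProduct, hP]
  ring

lemma euclNorm_mulVec_le (hB : B * Bᵀ = 1) (z : Fin k → ℝ) :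
    euclNorm (B *ᵥ z) ≤ euclNorm z := by
  refine (pow_le_pow_iff_left₀ (euclNorm_nonneg _) (euclNorm_nonneg _) two_ne_zero).1 ?_
  rw [euclNorm_sq_eq_add hB z]
  exact le_add_of_nonneg_right (sq_nonneg _)

variable {γ : ℝ}

lemma euclNorm_sub_transpose_mulVec_mulVec_le (hB : B * Bᵀ = 1) {z : Fin k → ℝ}
    (hz : (1 - γ) * euclNorm z ^ 2 ≤ euclNorm (B *ᵥ z) ^ 2) :
    euclNorm (z - Bᵀ *ᵥ (B *ᵥ z)) ≤ √γ * euclNorm z := by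
  have hsq : euclNorm (z - Bᵀ *ᵥ (B *ᵥ z)) ^ 2 ≤ γ * euclNorm z ^ 2 := by
    linarith [euclNorm_sq_eq_add hB z]
  calc euclNorm (z - Bᵀ *ᵥ (B *ᵥ z)) = √(euclNorm (z - Bᵀ *ᵥ (B *ᵥ z)) ^ 2) :=
        (Real.sqrt_sq (euclNorm_nonneg _)).symm
    _ ≤ √(γ * euclNorm z ^ 2) := Real.sqrt_le_sqrt hsq
    _ = √γ * euclNorm z := by rw [Real.sqrt_mul' _ (sq_nonneg _), Real.sqrt_sq (euclNorm_nonneg _)]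

lemma sub_transpose_mulVec_mulVec_dotProduct_le (hB : B * Bᵀ = 1) (hγ : 0 ≤ γ)
    {v w : Fin k → ℝ} (hv : (1 - γ) * euclNorm v ^ 2 ≤ euclNorm (B *ᵥ v) ^ 2)
    (hw : (1 - γ) * euclNorm w ^ 2 ≤ euclNorm (B *ᵥ w) ^ 2) :
    (v - Bᵀ *ᵥ (B *ᵥ v)) ⬝ᵥ w ≤ γ * euclNorm v * euclNorm w := by
  calc (v - Bᵀ *ᵥ (B *ᵥ v)) ⬝ᵥ w
      ≤ euclNorm (v - Bᵀ *ᵥ (B *ᵥ v)) * euclNorm (w - Bᵀ *ᵥ (B *ᵥ w)) := by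
        rw [sub_transpose_mulVec_mulVec_dotProduct hB]
        exact dotProduct_le_euclNorm_mul _ _
    _ ≤ (√γ * euclNorm v) * (√γ * euclNorm w) :=
        mul_le_mul (euclNorm_sub_transpose_mulVec_mulVec_le hB hv)
          (euclNorm_sub_transpose_mulVec_mulVec_le hB hw) (euclNorm_nonneg _)
          (mul_nonneg (Real.sqrt_nonneg _) (euclNorm_nonneg _))
    _ = γ * euclNorm v * euclNorm w := by rw [mul_mul_mul_comm, Real.mul_self_sqrt hγ, mul_assoc]

lemma euclNorm_sub_le_of_iterate {s : ℕ} (hB : B * Bᵀ = 1) (hγ : 0 ≤ γ)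
    (hRIP : ∀ z, IsSparse (2 * s) z → (1 - γ) * euclNorm z ^ 2 ≤ euclNorm (B *ᵥ z) ^ 2)
    {xs u u' x' : Fin k → ℝ} {et : Fin m → ℝ}
    (hxs : IsSparse s xs) (hu : IsSparse s u) (hu' : IsSparse s u')
    (hbest : euclNorm (u' - x') ≤ euclNorm (xs - x'))
    (hx' : x' - xs = (u - xs) - Bᵀ *ᵥ (B *ᵥ (u - xs)) + Bᵀ *ᵥ et) :
    euclNorm (u' - xs) ≤ 2 * γ * euclNorm (u - xs) + 2 * euclNorm et := by
  have hdiff : ∀ v, IsSparse s v → (1 - γ) * euclNorm (v - xs) ^ 2 ≤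
      euclNorm (B *ᵥ (v - xs)) ^ 2 := fun v hv => hRIP _ ((hv.sub hxs).mono (by omega))
  refine euclNorm_le_of_sq_le (by positivity [euclNorm_nonneg (u - xs), euclNorm_nonneg et]) ?_
  calc euclNorm (u' - xs) ^ 2 ≤ 2 * ((x' - xs) ⬝ᵥ (u' - xs)) :=
        sq_euclNorm_sub_le_of_euclNorm_sub_le hbest
    _ = 2 * ((u - xs - Bᵀ *ᵥ (B *ᵥ (u - xs))) ⬝ᵥ (u' - xs)) + 2 * (et ⬝ᵥ (B *ᵥ (u' - xs))) := by
        rw [hx', add_dotProduct, dotProduct_transpose_mulVec, mul_add]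
    _ ≤ 2 * (γ * euclNorm (u - xs) * euclNorm (u' - xs)) +
          2 * (euclNorm et * euclNorm (u' - xs)) := by
        gcongr
        · exact sub_transpose_mulVec_mulVec_dotProduct_le hB hγ (hdiff u hu) (hdiff u' hu')
        · exact (dotProduct_le_euclNorm_mul _ _).trans
            (mul_le_mul_of_nonneg_left (euclNorm_mulVec_le hB _) (euclNorm_nonneg _))
    _ = (2 * γ * euclNorm (u - xs) + 2 * euclNorm et) * euclNorm (u' - xs) := by ring

end RowOrthonormal

lemma le_pow_mul_add_div_of_le_mul_add {a : ℕ → ℝ} {ρ c : ℝ} (hρ : 0 ≤ ρ) (hρ1 : ρ < 1)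
    (hc : 0 ≤ c) (h : ∀ k, a (k + 1) ≤ ρ * a k + c) (k : ℕ) :
    a k ≤ ρ ^ k * a 0 + c / (1 - ρ) := by
  induction k with
  | zero => simpa using div_nonneg hc (sub_nonneg.2 hρ1.le)
  | succ k ih =>
    have hρ1' : 1 - ρ ≠ 0 := (sub_pos.2 hρ1).ne'
    calc a (k + 1) ≤ ρ * a k + c := h k
      _ ≤ ρ * (ρ ^ k * a 0 + c / (1 - ρ)) + c := by gcongr
      _ = ρ ^ (k + 1) * a 0 + c / (1 - ρ) := by field_simp; ring

theorem stmt_5_general {n N s : ℕ} (A : Matrix (Fin n) (Fin N) ℝ)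
    (hpd : (A * Aᵀ).PosDef)
    (x : Fin N → ℝ) (e b : Fin n → ℝ) (hb : b = A *ᵥ x + e)
    (xs : Fin N → ℝ) (hxs : IsSparse s xs)
    (et : Fin n → ℝ) (het : et = (hpd.posSemidef.sqrt)⁻¹ *ᵥ (A *ᵥ (x - xs) + e))
    (γ : ℝ) (hγ0 : 0 ≤ γ) (hγ : γ < 1/2)
    (hPRIP : ∀ z : Fin N → ℝ, IsSparse (3*s) z →
      (1 - γ) * euclNorm z ^ 2 ≤ euclNorm ((hpd.posSemidef.sqrt)⁻¹ *ᵥ (A *ᵥ z)) ^ 2)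
    (xk u : ℕ → Fin N → ℝ)
    (hus : ∀ k, IsSparse s (u k))
    (hub : ∀ k, ∀ z : Fin N → ℝ, IsSparse s z → euclNorm (u k - xk k) ≤ euclNorm (z - xk k))
    (hxk : ∀ k, xk (k+1) = u k + Aᵀ *ᵥ ((A * Aᵀ)⁻¹ *ᵥ (b - A *ᵥ u k))) :
    ∀ k, euclNorm (u k - xs) ≤
      (2 * γ) ^ k * euclNorm (u 0 - xs) + (2 / (1 - 2 * γ)) * euclNorm et := by
  have hSt := hpd.posSemidef.transpose_sqrt
  have hSS := hpd.posSemidef.sqrt_mul_self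
  have hB := mul_transpose_eq_one_of_mul_self_eq hpd.isUnit_det_sqrt hSt hSS
  have hstep (k : ℕ) :
      euclNorm (u (k + 1) - xs) ≤ 2 * γ * euclNorm (u k - xs) + 2 * euclNorm et := by
    refine euclNorm_sub_le_of_iterate hB hγ0 (fun z hz => ?_) hxs (hus k) (hus (k + 1))
      (hub (k + 1) xs hxs) ?_
    · simpa only [mulVec_mulVec] using hPRIP z (hz.mono (by omega))
    · rw [hxk, hb, het]
      exact add_transpose_mulVec_sub_eq hSt hSS x xs (u k) e
  intro k
  have := le_pow_mul_add_div_of_le_mul_add (a := fun k => euclNorm (u k - xs)) (by linarith)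
    (by linarith)
    (mul_nonneg zero_le_two (euclNorm_nonneg et)) hstep k
  rwa [mul_div_right_comm] at this

/-- error bound for NST+HT in the noisy / not exactly sparse case. -/
theorem stmt_5 {n N s : ℕ} (hnN : n < N) (A : Matrix (Fin n) (Fin N) ℝ)
    (hpd : (A * Aᵀ).PosDef)
    (x : Fin N → ℝ) (e b : Fin n → ℝ) (hb : b = A *ᵥ x + e)
    (xs : Fin N → ℝ) (hxs : IsSparse s xs)
    (hbest : ∀ z : Fin N → ℝ, IsSparse s z → euclNorm (xs - x) ≤ euclNorm (z - x))
    (et : Fin n → ℝ) (het : et = (hpd.posSemidef.sqrt)⁻¹ *ᵥ (A *ᵥ (x - xs) + e))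
    (γ : ℝ) (hγ0 : 0 ≤ γ) (hγ : γ < 1/2)
    (hPRIP : ∀ z : Fin N → ℝ, IsSparse (3*s) z →
      (1 - γ) * euclNorm z ^ 2 ≤ euclNorm ((hpd.posSemidef.sqrt)⁻¹ *ᵥ (A *ᵥ z)) ^ 2)
    (xk u : ℕ → Fin N → ℝ)
    (hus : ∀ k, IsSparse s (u k))
    (hub : ∀ k, ∀ z : Fin N → ℝ, IsSparse s z → euclNorm (u k - xk k) ≤ euclNorm (z - xk k))
    (hxk : ∀ k, xk (k+1) = u k + Aᵀ *ᵥ ((A * Aᵀ)⁻¹ *ᵥ (b - A *ᵥ u k))) :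
    ∀ k, euclNorm (u k - xs) ≤
      (2 * γ) ^ k * euclNorm (u 0 - xs) + (2 / (1 - 2 * γ)) * euclNorm et :=
  stmt_5_general A hpd x e b hb xs hxs et het γ hγ0 hγ hPRIP xk u hus hub hxk
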